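/- Let f : ℝⁿ → ℝ be a C² function and set W = √(1+‖∇f‖²). If the mean curvature expression H_f = div(∇f/W) is a constant function on ℝⁿ, equal to a ∈ ℝ, then a = 0; that is, an entire graph of constant mean curvature over ℝⁿ is a minimal hypersurface. -/

import Mathlib

open MeasureTheory

/-- The divergence of a vector field on Euclidean space: the trace of its derivative. -/
noncomputable def divergence {n : ℕ}
    (X : EuclideanSpace ℝ (Fin n) → EuclideanSpace ℝ (Fin n))
    (x : EuclideanSpace ℝ (Fin n)) : ℝ :=
  LinearMap.trace ℝ (EuclideanSpace ℝ (Fin n)) (fderiv ℝ X x).toLinearMap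

/-- `W = √(1 + ‖∇f‖²)`. -/
noncomputable def Wgraph {n : ℕ} (f : EuclideanSpace ℝ (Fin n) → ℝ)
    (x : EuclideanSpace ℝ (Fin n)) : ℝ :=
  Real.sqrt (1 + ‖gradient f x‖ ^ 2)

/-- The unnormalized mean curvature of the graph of `f`: `H_f = div (∇f / W)`. -/
noncomputable def meanCurvGraph {n : ℕ} (f : EuclideanSpace ℝ (Fin n) → ℝ)
    (x : EuclideanSpace ℝ (Fin n)) : ℝ :=
  divergence (fun y => (Wgraph f y)⁻¹ • gradient f y) x

/-!
The field `X = ∇f / W` is `C¹`, satisfies `‖X‖ ≤ 1`, and has divergence `H_f ≡ a`. By the divergence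
theorem on the cube `[-R, R]ⁿ`, `a (2R)ⁿ` equals the flux of `X` through the boundary, which is at
most the boundary area `2n (2R)ⁿ⁻¹`. So `|a| R ≤ n` for every `R > 0`, forcing `a = 0`.
-/

open Set Finset

theorem ContDiff.gradient {F : Type*} [NormedAddCommGroup F] [InnerProductSpace ℝ F]
    [CompleteSpace F] {f : F → ℝ} {m n : WithTop ℕ∞} (hf : ContDiff ℝ n f) (hmn : m + 1 ≤ n) :
    ContDiff ℝ m (_root_.gradient f) :=
  (InnerProductSpace.toDual ℝ F).symm.contDiff.comp (hf.fderiv_right hmn)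

theorem norm_inv_sqrt_one_add_norm_sq_smul_le_one {E : Type*} [NormedAddCommGroup E]
    [NormedSpace ℝ E] (v : E) : ‖(√(1 + ‖v‖ ^ 2))⁻¹ • v‖ ≤ 1 := by
  have hpos : 0 < √(1 + ‖v‖ ^ 2) := by positivity
  rw [norm_smul, norm_inv, Real.norm_of_nonneg hpos.le, inv_mul_le_iff₀ hpos, mul_one]
  exact Real.le_sqrt_of_sq_le (by linarith)

theorem Real.volume_real_Icc_neg_pi {ι : Type*} [Fintype ι] {R : ℝ} (hR : 0 ≤ R) :
    volume.real (Icc (fun _ : ι => -R) fun _ => R) = (2 * R) ^ Fintype.card ι := by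
  rw [measureReal_def, Real.volume_Icc_pi_toReal fun _ => by linarith]
  simp [two_mul]

section Cube

variable {n : ℕ} {F : (Fin (n + 1) → ℝ) → Fin (n + 1) → ℝ} {C a : ℝ}

theorem abs_mul_pow_le_of_sum_fderiv_eq (hF : Differentiable ℝ F) (hC : ∀ x i, |F x i| ≤ C)
    (ha : ∀ x, ∑ i, fderiv ℝ F x (Pi.single i 1) i = a) {R : ℝ} (hR : 0 ≤ R) :
    |a| * (2 * R) ^ (n + 1) ≤ (n + 1) * (2 * C * (2 * R) ^ n) := by
  set lo : Fin (n + 1) → ℝ := fun _ => -R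
  set hi : Fin (n + 1) → ℝ := fun _ => R
  have hle : lo ≤ hi := fun _ => neg_le_self hR
  have hdiv := integral_divergence_of_hasFDerivAt_off_countable lo hi hle F (fderiv ℝ F) ∅
    countable_empty hF.continuous.continuousOn (fun x _ => (hF x).hasFDerivAt)
    (by simp_rw [ha]; exact integrableOn_const isCompact_Icc.measure_lt_top.ne)
  simp_rw [ha] at hdiv
  have hface : ∀ i c, |∫ x in Icc (fun _ : Fin n => -R) (fun _ => R), F (i.insertNth c x) i|
      ≤ C * (2 * R) ^ n := fun i c => by
    have h := norm_setIntegral_le_of_norm_le_const (f := fun x => F (i.insertNth c x) i)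
      (s := Icc (fun _ : Fin n => -R) fun _ => R) (isCompact_Icc.measure_lt_top (μ := volume))
      fun x _ => (Real.norm_eq_abs _).trans_le (hC _ i)
    rwa [Real.norm_eq_abs, Real.volume_real_Icc_neg_pi hR, Fintype.card_fin] at h
  calc |a| * (2 * R) ^ (n + 1) = |∫ _ in Icc lo hi, a| := by
        rw [setIntegral_const, Real.volume_real_Icc_neg_pi hR, smul_eq_mul, abs_mul,
          abs_of_nonneg (by positivity : (0 : ℝ) ≤ (2 * R) ^ _), Fintype.card_fin, mul_comm]
    _ ≤ ∑ i : Fin (n + 1), (|∫ x in Icc (lo ∘ i.succAbove) (hi ∘ i.succAbove),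
          F (i.insertNth (hi i) x) i| + |∫ x in Icc (lo ∘ i.succAbove) (hi ∘ i.succAbove),
          F (i.insertNth (lo i) x) i|) := by
        rw [hdiv]
        exact (abs_sum_le_sum_abs _ _).trans (sum_le_sum fun i _ => abs_sub _ _)
    _ ≤ ∑ _i : Fin (n + 1), (C * (2 * R) ^ n + C * (2 * R) ^ n) :=
        sum_le_sum fun i _ => add_le_add (hface i _) (hface i _)
    _ = (n + 1) * (2 * C * (2 * R) ^ n) := by
        simp only [sum_const, card_univ, Fintype.card_fin, nsmul_eq_mul]
        push_cast
        ring

theorem eq_zero_of_sum_fderiv_eq_of_abs_le (hF : Differentiable ℝ F) (hC : ∀ x i, |F x i| ≤ C)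
    (ha : ∀ x, ∑ i, fderiv ℝ F x (Pi.single i 1) i = a) : a = 0 := by
  have hC₀ : 0 ≤ C := (abs_nonneg _).trans (hC 0 0)
  have hlin : ∀ R, 0 < R → |a| * R ≤ (n + 1) * C := fun R hR => by
    have h := abs_mul_pow_le_of_sum_fderiv_eq hF hC ha hR.le
    have hpow : 0 < (2 * R) ^ n := by positivity
    rw [pow_succ] at h
    nlinarith [abs_nonneg a]
  by_contra ha₀
  have hpos : 0 < |a| := abs_pos.2 ha₀
  have := hlin (((n + 1) * C + 1) / |a|) (by positivity)
  rw [mul_div_cancel₀ _ hpos.ne'] at this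
  linarith

end Cube

theorem divergence_eq_sum {n : ℕ} (X : EuclideanSpace ℝ (Fin n) → EuclideanSpace ℝ (Fin n))
    (x : EuclideanSpace ℝ (Fin n)) :
    divergence X x = ∑ i, fderiv ℝ X x (EuclideanSpace.single i 1) i := by
  rw [divergence,
    LinearMap.trace_eq_matrix_trace ℝ (EuclideanSpace.basisFun (Fin n) ℝ).toBasis, Matrix.trace]
  simp [LinearMap.toMatrix_apply]

theorem eq_zero_of_divergence_eq_of_norm_le {n : ℕ}
    {X : EuclideanSpace ℝ (Fin n) → EuclideanSpace ℝ (Fin n)} (hX : Differentiable ℝ X) {C a : ℝ}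
    (hC : ∀ x, ‖X x‖ ≤ C) (ha : ∀ x, divergence X x = a) : a = 0 := by
  cases n with
  | zero => rw [← ha 0, divergence, Subsingleton.elim (fderiv ℝ X 0).toLinearMap 0, map_zero]
  | succ n =>
    set φ := EuclideanSpace.equiv (Fin (n + 1)) ℝ
    have hXφ : ∀ y, HasFDerivAt (φ ∘ X ∘ φ.symm)
        ((φ : _ →L[ℝ] _).comp ((fderiv ℝ X (φ.symm y)).comp φ.symm)) y := fun y =>
      φ.hasFDerivAt.comp y ((hX _).hasFDerivAt.comp y φ.symm.hasFDerivAt)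
    refine eq_zero_of_sum_fderiv_eq_of_abs_le (C := C) (fun y => (hXφ y).differentiableAt)
      (fun y i => (PiLp.norm_apply_le _ i).trans (hC _)) fun y => ?_
    rw [(hXφ y).fderiv, ← ha (φ.symm y), divergence_eq_sum]
    rfl

theorem differentiable_inv_Wgraph_smul_gradient {n : ℕ} {f : EuclideanSpace ℝ (Fin n) → ℝ}
    (hf : ContDiff ℝ 2 f) : Differentiable ℝ fun y => (Wgraph f y)⁻¹ • gradient f y := by
  have hg : Differentiable ℝ (gradient f) := (hf.gradient (by norm_num)).differentiable one_ne_zero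
  have hW : Differentiable ℝ (Wgraph f) := fun y =>
    ((hg y).norm_sq ℝ).const_add 1 |>.sqrt (by positivity)
  exact (hW.inv fun y => (Real.sqrt_pos.2 (by positivity)).ne').smul hg

/-- An entire graph over `ℝⁿ` of constant mean curvature is minimal. -/
theorem stmt3 {n : ℕ} (f : EuclideanSpace ℝ (Fin n) → ℝ)
    (hf : ContDiff ℝ 2 f) (a : ℝ)
    (hH : ∀ x, meanCurvGraph f x = a) : a = 0 :=
  eq_zero_of_divergence_eq_of_norm_le (differentiable_inv_Wgraph_smul_gradient hf)
    (fun y => norm_inv_sqrt_one_add_norm_sq_smul_le_one (gradient f y)) hH
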